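/- For a proper nonempty subset f of vertices of a connected graph, the inverse of the restricted normalized Laplacian is given by the heat kernel integral: 𝓛_f⁻¹ = ∫₀^∞ (𝓗_t)_f dt, where (𝓗_t)_f = e^{-t 𝓛_f}. -/

import Mathlib

/-!
The restricted normalized Laplacian `D_f^{-1/2} L_f D_f^{-1/2}` is positive definite: the quadratic
form of the graph Laplacian `L` vanishes only on vectors that are constant on the connected graph,
while a vector extended by zero from `f` vanishes at a vertex outside `f`. A positive definite
symmetric matrix `A = U diag(μ) Uᵀ` has `A⁻¹` and `e^{-tA}` diagonalized by the same `U`, so the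
identity reduces to `∫₀^∞ e^{-tμ} dt = μ⁻¹` for every eigenvalue `μ > 0`.
-/

open Matrix MeasureTheory Function

theorem integral_exp_neg_mul_Ioi_zero {μ : ℝ} (hμ : 0 < μ) :
    ∫ t in Set.Ioi (0 : ℝ), Real.exp (-t * μ) = μ⁻¹ := by
  have h := integral_exp_mul_Ioi (neg_lt_zero.2 hμ) 0
  simp only [mul_zero, Real.exp_zero, neg_div_neg_eq, one_div, neg_mul] at h
  simpa only [neg_mul, mul_comm μ] using h

namespace Matrix

section Orthogonal

variable {n : Type*} [Fintype n] [DecidableEq n] {U : Matrix n n ℝ}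

theorem mul_diagonal_mul_star_apply (d : n → ℝ) (i j : n) :
    (U * diagonal d * star U) i j = ∑ k, U i k * d k * U j k := by
  rw [mul_apply]
  simp only [mul_diagonal, star_apply, star_trivial]

theorem exp_mul_diagonal_mul_star (hU : U ∈ unitaryGroup n ℝ) (d : n → ℝ) :
    NormedSpace.exp (U * diagonal d * star U) =
      U * diagonal (fun k => Real.exp (d k)) * star U := by
  have hinv : U⁻¹ = star U := inv_eq_left_inv (mem_unitaryGroup_iff'.1 hU)
  rw [← hinv, exp_conj _ _ (Unitary.isUnit_coe (U := ⟨U, hU⟩)), exp_diagonal]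
  congr 3
  funext k
  rw [Pi.coe_exp, Real.exp_eq_exp_ℝ]

theorem inv_mul_diagonal_mul_star (hU : U ∈ unitaryGroup n ℝ) {d : n → ℝ} (hd : ∀ k, d k ≠ 0) :
    (U * diagonal d * star U)⁻¹ = U * diagonal (fun k => (d k)⁻¹) * star U := by
  refine inv_eq_left_inv ?_
  have hdiag : diagonal (fun k => (d k)⁻¹) * diagonal d = 1 := by
    rw [diagonal_mul_diagonal, ← diagonal_one]
    exact congrArg diagonal (funext fun k => inv_mul_cancel₀ (hd k))
  calc U * diagonal (fun k => (d k)⁻¹) * star U * (U * diagonal d * star U)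
      = U * (diagonal (fun k => (d k)⁻¹) * (star U * U) * diagonal d) * star U := by
        simp only [Matrix.mul_assoc]
    _ = 1 := by
        rw [mem_unitaryGroup_iff'.1 hU, Matrix.mul_one, hdiag, Matrix.mul_one,
          mem_unitaryGroup_iff.1 hU]

theorem inv_mul_diagonal_mul_star_apply_eq_integral_exp (hU : U ∈ unitaryGroup n ℝ)
    {μ : n → ℝ} (hμ : ∀ k, 0 < μ k) (i j : n) :
    (U * diagonal μ * star U)⁻¹ i j =
      ∫ t in Set.Ioi (0 : ℝ), NormedSpace.exp (-t • (U * diagonal μ * star U)) i j := by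
  have hexp : ∀ t : ℝ, NormedSpace.exp (-t • (U * diagonal μ * star U)) =
      U * diagonal (fun k => Real.exp (-t * μ k)) * star U := fun t => by
    rw [← smul_mul_assoc, ← mul_smul_comm, ← diagonal_smul, exp_mul_diagonal_mul_star hU]
    rfl
  have hint : ∀ k, IntegrableOn (fun t => U i k * Real.exp (-t * μ k) * U j k) (Set.Ioi 0) := by
    intro k
    have hk : IntegrableOn (fun t => Real.exp (-t * μ k)) (Set.Ioi 0) := by
      simpa only [neg_mul, mul_comm (μ k)] using exp_neg_integrableOn_Ioi 0 (hμ k)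
    exact (hk.const_mul (U i k)).mul_const (U j k)
  calc (U * diagonal μ * star U)⁻¹ i j = ∑ k, U i k * (μ k)⁻¹ * U j k := by
        rw [inv_mul_diagonal_mul_star hU fun k => (hμ k).ne', mul_diagonal_mul_star_apply]
    _ = ∑ k, ∫ t in Set.Ioi (0 : ℝ), U i k * Real.exp (-t * μ k) * U j k := by
        refine Finset.sum_congr rfl fun k _ => ?_
        rw [integral_mul_const, integral_const_mul, integral_exp_neg_mul_Ioi_zero (hμ k)]
    _ = ∫ t in Set.Ioi (0 : ℝ), ∑ k, U i k * Real.exp (-t * μ k) * U j k :=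
        (integral_finsetSum _ fun k _ => hint k).symm
    _ = _ := by simp only [hexp, mul_diagonal_mul_star_apply]

end Orthogonal

theorem PosDef.inv_apply_eq_integral_exp {n : Type*} [Fintype n] [DecidableEq n]
    {A : Matrix n n ℝ} (hA : A.PosDef) (i j : n) :
    A⁻¹ i j = ∫ t in Set.Ioi (0 : ℝ), NormedSpace.exp (-t • A) i j := by
  have hspec : A = hA.isHermitian.eigenvectorUnitary * diagonal hA.isHermitian.eigenvalues *
      star (hA.isHermitian.eigenvectorUnitary : Matrix n n ℝ) := by
    simpa [RCLike.ofReal_real_eq_id] using hA.isHermitian.spectral_theorem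
  rw [hspec]
  exact inv_mul_diagonal_mul_star_apply_eq_integral_exp
    hA.isHermitian.eigenvectorUnitary.2 hA.eigenvalues_pos i j

theorem dotProduct_submatrix_mulVec_self {ι V R : Type*} [Fintype ι] [Fintype V]
    [CommSemiring R] (M : Matrix V V R) {e : ι → V} (he : Injective e) (x : ι → R) :
    x ⬝ᵥ (M.submatrix e e *ᵥ x) = extend e x 0 ⬝ᵥ (M *ᵥ extend e x 0) := by
  have hext : ∀ g : V → R, extend e x 0 ⬝ᵥ g = x ⬝ᵥ (g ∘ e) := fun g =>
    (Fintype.sum_of_injective e he _ _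
      (fun v hv => by rw [extend_apply' _ _ _ hv, Pi.zero_apply, zero_mul])
      (fun i => by rw [he.extend_apply]; rfl)).symm
  have hsub : M.submatrix e e *ᵥ x = (M *ᵥ extend e x 0) ∘ e := funext fun i => by
    show (fun j => M (e i) (e j)) ⬝ᵥ x = (fun w => M (e i) w) ⬝ᵥ extend e x 0
    rw [dotProduct_comm _ (extend e x 0), hext, dotProduct_comm]
    rfl
  rw [hsub, hext]

theorem submatrix_diagonal_mul_mul_diagonal {V ι κ R : Type*} [Fintype V] [DecidableEq V]
    [Fintype ι] [DecidableEq ι] [Fintype κ] [DecidableEq κ] [CommSemiring R] (d d' : V → R)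
    (M : Matrix V V R) (e₁ : ι → V) (e₂ : κ → V) :
    (diagonal d * M * diagonal d').submatrix e₁ e₂ =
      diagonal (d ∘ e₁) * M.submatrix e₁ e₂ * diagonal (d' ∘ e₂) := by
  ext
  simp [mul_diagonal, diagonal_mul]

end Matrix

namespace SimpleGraph

variable {V ι : Type*} [Fintype V] [DecidableEq V] [Fintype ι] (G : SimpleGraph V)
  [DecidableRel G.Adj]

noncomputable def normLapMatrix : Matrix V V ℝ :=
  diagonal (fun v => (Real.sqrt (G.degree v : ℝ))⁻¹) * G.lapMatrix ℝ *
    diagonal (fun v => (Real.sqrt (G.degree v : ℝ))⁻¹)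

variable {G}

theorem Connected.eq_zero_of_lapMatrix_dotProduct_eq_zero (hG : G.Connected) {x : V → ℝ}
    (hx : x ⬝ᵥ (G.lapMatrix ℝ *ᵥ x) = 0) {v : V} (hv : x v = 0) : x = 0 := by
  rw [← toLinearMap₂'_apply', lapMatrix_toLinearMap₂'_apply'_eq_zero_iff_forall_reachable] at hx
  exact funext fun w => (hx w v (hG.preconnected w v)).trans hv

theorem posDef_lapMatrix_submatrix (hG : G.Connected) {e : ι → V} (he : Injective e)
    (he' : ¬ Surjective e) : ((G.lapMatrix ℝ).submatrix e e).PosDef := by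
  obtain ⟨v, hv⟩ := not_forall.1 he'
  have hpsd := posSemidef_lapMatrix ℝ G
  refine PosDef.of_dotProduct_mulVec_pos (hpsd.submatrix e).isHermitian fun x hx => ?_
  rw [star_trivial, dotProduct_submatrix_mulVec_self _ he]
  have hnonneg : 0 ≤ extend e x 0 ⬝ᵥ (G.lapMatrix ℝ *ᵥ extend e x 0) := by
    simpa using hpsd.dotProduct_mulVec_nonneg (extend e x 0)
  refine hnonneg.lt_of_ne' fun h => hx ?_
  have hzero := hG.eq_zero_of_lapMatrix_dotProduct_eq_zero h (extend_apply' _ _ _ hv)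
  exact funext fun i => by simpa [he.extend_apply] using congrFun hzero (e i)

theorem posDef_normLapMatrix_submatrix [DecidableEq ι] (hG : G.Connected) {e : ι → V}
    (he : Injective e) (he' : ¬ Surjective e) : (G.normLapMatrix.submatrix e e).PosDef := by
  obtain ⟨v, hv⟩ := not_forall.1 he'
  have hdeg : ∀ i, (Real.sqrt (G.degree (e i) : ℝ))⁻¹ ≠ 0 := fun i =>
    inv_ne_zero (Real.sqrt_ne_zero'.2 (Nat.cast_pos.2
      ((hG.preconnected (e i) v).degree_pos_left fun h => hv ⟨i, h⟩)))
  have hB : Injective (diagonal fun i => (Real.sqrt (G.degree (e i) : ℝ))⁻¹).mulVec :=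
    mulVec_injective_of_isUnit (isUnit_diagonal.2 (Pi.isUnit_iff.2 fun i => (hdeg i).isUnit))
  rw [normLapMatrix, submatrix_diagonal_mul_mul_diagonal]
  have h := (posDef_lapMatrix_submatrix hG he he').conjTranspose_mul_mul_same hB
  rwa [diagonal_conjTranspose, star_trivial] at h

end SimpleGraph

theorem restricted_laplacian_inverse_heat_kernel_integral_general
    (n : ℕ) (G : SimpleGraph (Fin n)) [DecidableRel G.Adj]
    (hconn : G.Connected)
    (f : Finset (Fin n)) (hproper : f ≠ Finset.univ) :
    let A : Matrix (Fin n) (Fin n) ℝ := G.adjMatrix ℝ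
    let D : Matrix (Fin n) (Fin n) ℝ := Matrix.diagonal fun i => (G.degree i : ℝ)
    let DnegHalf : Matrix (Fin n) (Fin n) ℝ :=
      Matrix.diagonal fun i => (Real.sqrt (G.degree i : ℝ))⁻¹
    let 𝓛 : Matrix (Fin n) (Fin n) ℝ := DnegHalf * (D - A) * DnegHalf
    let 𝓛f : Matrix {i // i ∈ f} {i // i ∈ f} ℝ :=
      𝓛.submatrix (fun i => (i : Fin n)) (fun i => (i : Fin n))
    ∀ i j, 𝓛f⁻¹ i j = ∫ t in Set.Ioi (0 : ℝ), (NormedSpace.exp (-t • 𝓛f)) i j := by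
  intro A D DnegHalf 𝓛 𝓛f
  have hproper' : ¬ Surjective ((↑) : f → Fin n) := fun h =>
    hproper (Finset.eq_univ_of_forall fun v => by obtain ⟨i, rfl⟩ := h v; exact i.2)
  exact PosDef.inv_apply_eq_integral_exp
    (G.posDef_normLapMatrix_submatrix hconn Subtype.val_injective hproper')

theorem restricted_laplacian_inverse_heat_kernel_integral
    (n : ℕ) (G : SimpleGraph (Fin n)) [DecidableRel G.Adj]
    (hconn : G.Connected) (hdeg : ∀ i, 0 < G.degree i)
    (f : Finset (Fin n)) (hne : f.Nonempty) (hproper : f ≠ Finset.univ) :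
    let A : Matrix (Fin n) (Fin n) ℝ := G.adjMatrix ℝ
    let D : Matrix (Fin n) (Fin n) ℝ := Matrix.diagonal fun i => (G.degree i : ℝ)
    let DnegHalf : Matrix (Fin n) (Fin n) ℝ :=
      Matrix.diagonal fun i => (Real.sqrt (G.degree i : ℝ))⁻¹
    let 𝓛 : Matrix (Fin n) (Fin n) ℝ := DnegHalf * (D - A) * DnegHalf
    let 𝓛f : Matrix {i // i ∈ f} {i // i ∈ f} ℝ :=
      𝓛.submatrix (fun i => (i : Fin n)) (fun i => (i : Fin n))
    ∀ i j, 𝓛f⁻¹ i j = ∫ t in Set.Ioi (0 : ℝ), (NormedSpace.exp (-t • 𝓛f)) i j :=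
  restricted_laplacian_inverse_heat_kernel_integral_general n G hconn f hproper
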